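/- Derandomization of a randomized algorithm on a finite input set, maximization (core of the maximization derandomization Theorem of the appendix). Let I be a nonempty finite set, A a nonempty type, μ a probability mass function on A, cost : A → I → ℝ≥0 and opt : I → ℝ≥0 functions, and c ≥ 1 a real, such that cost(a,σ) ≤ opt(σ) for all a ∈ A and σ ∈ I, and opt(σ) ≤ c·E_{a∼μ}[cost(a,σ)] for all σ ∈ I. Let 0 < ε < 1 and let t be a natural number with t > log₂|I| · ((c−1)/ε + 1). Then there exist a₁,…,a_t ∈ A such that for every σ ∈ I there is some 1 ≤ i ≤ t with cost(a_i, σ) ≥ (1−ε)·E_{a∼μ}[cost(a,σ)]. -/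

import Mathlib

open scoped ENNReal NNReal

/-!
Call `a` good for `σ` when `cost a σ ≥ (1 - ε) 𝔼 cost(·, σ)`. For fixed `σ`, splitting the
expectation along this event and bounding profits by `opt σ ≤ c 𝔼` shows that its probability `p`
satisfies `1 ≤ p c + (1 - p)(1 - ε)`, i.e. `p ≥ q := ε / (c - 1 + ε)`. By averaging, every set of
inputs contains a `q`-fraction on which a single `a` is good, so greedily choosing such `a`'s
leaves at most `(1 - q)^t |I| ≤ e^{-q t} |I| < 1` inputs uncovered, because `log₂|I| / q < t`.
-/

open Finset

namespace PMF

variable {A : Type*} (μ : PMF A)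

theorem toOuterMeasure_add_toOuterMeasure_compl (s : Set A) :
    μ.toOuterMeasure s + μ.toOuterMeasure sᶜ = 1 := by
  rw [toOuterMeasure_apply, toOuterMeasure_apply, ← ENNReal.tsum_add, ← μ.tsum_coe]
  exact tsum_congr fun a => s.indicator_self_add_compl_apply μ a

theorem tsum_mul_le_toOuterMeasure_mul_add (s : Set A) {f : A → ℝ≥0∞} {x y : ℝ≥0∞}
    (hs : ∀ a ∈ s, f a ≤ x) (hsc : ∀ a ∉ s, f a ≤ y) :
    ∑' a, μ a * f a ≤ μ.toOuterMeasure s * x + μ.toOuterMeasure sᶜ * y := by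
  rw [toOuterMeasure_apply, toOuterMeasure_apply, ← ENNReal.tsum_mul_right,
    ← ENNReal.tsum_mul_right, ← ENNReal.tsum_add]
  refine ENNReal.tsum_le_tsum fun a => ?_
  by_cases ha : a ∈ s
  · simpa [ha] using mul_le_mul_right (hs a ha) (μ a)
  · simpa [ha] using mul_le_mul_right (hsc a ha) (μ a)

theorem ofReal_div_le_toOuterMeasure_of_le_mul_tsum {f : A → ℝ≥0∞} {o : ℝ≥0∞} (ho : o ≠ ⊤)
    (hf : ∀ a, f a ≤ o) {c ε : ℝ} (hc : 1 ≤ c) (hε0 : 0 < ε) (hε1 : ε < 1)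
    (hopt : o ≤ ENNReal.ofReal c * ∑' a, μ a * f a) :
    ENNReal.ofReal (ε / (c - 1 + ε)) ≤
      μ.toOuterMeasure {a | ENNReal.ofReal (1 - ε) * ∑' d, μ d * f d ≤ f a} := by
  set E := ∑' d, μ d * f d
  set s := {a | ENNReal.ofReal (1 - ε) * E ≤ f a}
  have hD : 0 < c - 1 + ε := by linarith
  by_cases hE : E = 0
  · rw [(μ.toOuterMeasure_apply_eq_one_iff s).mpr fun a _ => by simp [s, hE]]
    exact ENNReal.ofReal_le_one.mpr ((div_le_one hD).mpr (by linarith))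
  have hEo : E ≤ o := by
    calc E ≤ ∑' d, μ d * o := ENNReal.tsum_le_tsum fun d => mul_le_mul_right (hf d) _
      _ = o := by rw [ENNReal.tsum_mul_right, μ.tsum_coe, one_mul]
  have hEtop : E ≠ ⊤ := ne_top_of_le_ne_top ho hEo
  have hsplit : E ≤ μ.toOuterMeasure s * (ENNReal.ofReal c * E) +
      μ.toOuterMeasure sᶜ * (ENNReal.ofReal (1 - ε) * E) :=
    μ.tsum_mul_le_toOuterMeasure_mul_add s (fun a _ => (hf a).trans hopt)
      fun a ha => (not_le.mp ha).le
  have hPQ := μ.toOuterMeasure_add_toOuterMeasure_compl s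
  have hP : μ.toOuterMeasure s ≠ ⊤ := ne_top_of_le_ne_top ENNReal.one_ne_top (hPQ ▸ le_self_add)
  have hQ : μ.toOuterMeasure sᶜ ≠ ⊤ := ne_top_of_le_ne_top ENNReal.one_ne_top (hPQ ▸ le_add_self)
  have hsplit' := ENNReal.toReal_mono (by finiteness) hsplit
  rw [ENNReal.toReal_add (by finiteness) (by finiteness)] at hsplit'
  simp only [ENNReal.toReal_mul, ENNReal.toReal_ofReal (by linarith : (0 : ℝ) ≤ c),
    ENNReal.toReal_ofReal (by linarith : (0 : ℝ) ≤ 1 - ε)] at hsplit'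
  have hPQ' : (μ.toOuterMeasure s).toReal + (μ.toOuterMeasure sᶜ).toReal = 1 := by
    rw [← ENNReal.toReal_add hP hQ, hPQ, ENNReal.toReal_one]
  have hmul : E.toReal * ε ≤ E.toReal * ((μ.toOuterMeasure s).toReal * (c - 1 + ε)) := by
    rw [← sub_eq_of_eq_add' hPQ'.symm] at hsplit'
    linear_combination hsplit'
  refine ENNReal.ofReal_le_of_le_toReal ((div_le_iff₀ hD).mpr ?_)
  exact le_of_mul_le_mul_left hmul (ENNReal.toReal_pos hE hEtop)

theorem exists_tsum_mul_le {f : A → ℕ} (hf : BddAbove (Set.range f)) :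
    ∃ a, ∑' x, μ x * (f x : ℝ≥0∞) ≤ f a := by
  have : Nonempty A := let ⟨a, _⟩ := μ.support_nonempty; ⟨a⟩
  obtain ⟨a, ha⟩ := Nat.sSup_mem (Set.range_nonempty f) hf
  refine ⟨a, ?_⟩
  calc ∑' x, μ x * (f x : ℝ≥0∞) ≤ ∑' x, μ x * (f a : ℝ≥0∞) :=
        ENNReal.tsum_le_tsum fun x =>
          mul_le_mul_right (Nat.cast_le.mpr (ha ▸ le_csSup hf ⟨x, rfl⟩)) _
    _ = f a := by rw [ENNReal.tsum_mul_right, μ.tsum_coe, one_mul]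

theorem exists_mul_card_le_card_filter {I : Type*} (good : A → I → Prop)
    [∀ a, DecidablePred (good a)] {q : ℝ} (hq : 0 ≤ q)
    (hgood : ∀ σ, ENNReal.ofReal q ≤ μ.toOuterMeasure {a | good a σ}) (S : Finset I) :
    ∃ a, q * #S ≤ #(S.filter (good a)) := by
  obtain ⟨a, ha⟩ := μ.exists_tsum_mul_le (f := fun a => #(S.filter (good a)))
    ⟨#S, by rintro _ ⟨a, rfl⟩; exact card_filter_le _ _⟩
  refine ⟨a, ?_⟩
  have hcount : ∀ x, ∑ σ ∈ S, {a | good a σ}.indicator μ x = μ x * #(S.filter (good x)) := by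
    intro x
    simp only [Set.indicator_apply, Set.mem_ofPred_eq]
    rw [← sum_filter, sum_const, nsmul_eq_mul, mul_comm]
  have : ENNReal.ofReal (q * #S) ≤ ENNReal.ofReal #(S.filter (good a)) :=
    calc ENNReal.ofReal (q * #S) = ∑ _σ ∈ S, ENNReal.ofReal q := by
          rw [ENNReal.ofReal_mul hq, ENNReal.ofReal_natCast, sum_const, nsmul_eq_mul, mul_comm]
      _ ≤ ∑ σ ∈ S, μ.toOuterMeasure {a | good a σ} := sum_le_sum fun σ _ => hgood σ
      _ = ∑' x, μ x * #(S.filter (good x)) := by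
          simp only [toOuterMeasure_apply, ← hcount]
          exact (Summable.tsum_finsetSum fun _ _ => ENNReal.summable).symm
      _ ≤ ENNReal.ofReal #(S.filter (good a)) := by rwa [ENNReal.ofReal_natCast]
  exact (ENNReal.ofReal_le_ofReal_iff (Nat.cast_nonneg _)).mp this

end PMF

theorem exists_card_filter_forall_not_le {A I : Type*} (good : A → I → Prop)
    [∀ a, DecidablePred (good a)] {q : ℝ} (hq : q ≤ 1)
    (hstep : ∀ S : Finset I, ∃ a, q * #S ≤ #(S.filter (good a))) (n : ℕ) (S : Finset I) :
    ∃ a : Fin n → A, (#(S.filter fun σ => ∀ i, ¬ good (a i) σ) : ℝ) ≤ (1 - q) ^ n * #S := by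
  induction n generalizing S with
  | zero => exact ⟨Fin.elim0, by simp⟩
  | succ n ih =>
    obtain ⟨a₀, ha₀⟩ := hstep S
    obtain ⟨a, ha⟩ := ih (S.filter fun σ => ¬ good a₀ σ)
    refine ⟨Fin.cons a₀ a, ?_⟩
    have hrest : S.filter (fun σ => ∀ i, ¬ good ((Fin.cons a₀ a : Fin (n + 1) → A) i) σ) =
        (S.filter fun σ => ¬ good a₀ σ).filter fun σ => ∀ i, ¬ good (a i) σ := by
      ext σ
      simp [Fin.forall_fin_succ, and_assoc]
    have hcard : (#(S.filter fun σ => ¬ good a₀ σ) : ℝ) ≤ (1 - q) * #S := by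
      have hsum : (#(S.filter (good a₀)) : ℝ) + #(S.filter fun σ => ¬ good a₀ σ) = #S := by
        exact_mod_cast card_filter_add_card_filter_not (s := S) (good a₀)
      linarith
    rw [hrest]
    calc _ ≤ (1 - q) ^ n * #(S.filter fun σ => ¬ good a₀ σ) := ha
      _ ≤ (1 - q) ^ n * ((1 - q) * #S) := by gcongr
      _ = (1 - q) ^ (n + 1) * #S := by ring

theorem one_sub_pow_mul_lt_one {q : ℝ} (hq : q ≤ 1) {N t : ℕ} (h : Real.logb 2 N < q * t) :
    (1 - q) ^ t * N < 1 := by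
  rcases Nat.eq_zero_or_pos N with rfl | hN
  · simp
  have hlog : Real.log N ≤ Real.logb 2 N := by
    rw [Real.logb, le_div_iff₀ (Real.log_pos one_lt_two)]
    nlinarith [Real.log_two_lt_d9, Real.log_natCast_nonneg N]
  calc (1 - q) ^ t * N ≤ Real.exp (-q) ^ t * Real.exp (Real.log N) := by
        rw [Real.exp_log (by exact_mod_cast hN)]
        gcongr
        exact Real.one_sub_le_exp_neg q
    _ = Real.exp (Real.log N - q * t) := by
        rw [← Real.exp_nat_mul, ← Real.exp_add]; ring_nf
    _ < 1 := Real.exp_lt_one_iff.mpr (by linarith)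

theorem derandomize_max
    {I : Type*} [Fintype I]
    {A : Type*}
    (μ : PMF A) (cost : A → I → ℝ≥0) (opt : I → ℝ≥0)
    (c : ℝ) (hc : 1 ≤ c)
    (hbound : ∀ (a : A) (σ : I), cost a σ ≤ opt σ)
    (hcomp : ∀ σ : I, (opt σ : ℝ≥0∞) ≤ ENNReal.ofReal c * ∑' d : A, μ d * (cost d σ : ℝ≥0∞))
    (ε : ℝ) (hε0 : 0 < ε) (hε1 : ε < 1)
    (t : ℕ) (ht : Real.logb 2 (Fintype.card I) * ((c - 1) / ε + 1) < t) :
    ∃ a : Fin t → A, ∀ σ : I, ∃ i : Fin t,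
      ENNReal.ofReal (1 - ε) * ∑' d : A, μ d * (cost d σ : ℝ≥0∞) ≤ (cost (a i) σ : ℝ≥0∞) := by
  classical
  set q := ε / (c - 1 + ε)
  have hD : 0 < c - 1 + ε := by linarith
  have hq1 : q ≤ 1 := (div_le_one hD).mpr (by linarith)
  have hprob (σ : I) := μ.ofReal_div_le_toOuterMeasure_of_le_mul_tsum ENNReal.coe_ne_top
    (fun a => ENNReal.coe_le_coe.mpr (hbound a σ)) hc hε0 hε1 (hcomp σ)
  obtain ⟨a, ha⟩ := exists_card_filter_forall_not_le _ hq1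
    (μ.exists_mul_card_le_card_filter _ (by positivity) hprob) t univ
  have hlog : Real.logb 2 (Fintype.card I) < q * t := by
    have hq : (c - 1) / ε + 1 = 1 / q := by rw [one_div_div, div_add_one hε0.ne']
    rwa [hq, mul_one_div, div_lt_iff₀' (by positivity)] at ht
  rw [card_univ] at ha
  have hcover := card_eq_zero.mp <| Nat.lt_one_iff.mp <| by
    exact_mod_cast ha.trans_lt (one_sub_pow_mul_lt_one hq1 hlog)
  refine ⟨a, fun σ => ?_⟩
  by_contra! hσ
  exact eq_empty_iff_forall_notMem.mp hcover σ (by simpa using hσ)
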